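/- Let A be a commutative ring, B a commutative A-algebra, n a positive integer, and m a natural number. Let v ∈ B, let b_0, ..., b_{n-1} ∈ A, and set u = ∑_{i=0}^{n-1} b_i v^i. If the element v·u is m-integral over A, then u is (n·m)-integral over A. -/

import Mathlib

/-!
Put `w = v * u`. Since `u ^ n = u * u ^ (n - 1) = ∑ bᵢ wⁱ u ^ (n - 1 - i)`, the `A`-module
`M = A[w] * span {1, u, …, u ^ (n - 1)}` is stable under multiplication by `u`, and it contains `1`.
As `w` is `m`-integral, `A[w]` is spanned by `1, w, …, w ^ (m - 1)`, so `M` is spanned by `n * m`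
elements. Cayley–Hamilton for multiplication by `u` on `M` yields a monic polynomial of degree at
most `n * m` killing `u`; a factor `X ^ k` raises the degree to exactly `n * m`.
-/

open Polynomial

def IsIntegralOfDegree (A : Type*) {B : Type*} [CommRing A] [Ring B] [Algebra A B] (x : B)
    (k : ℕ) : Prop :=
  ∃ P : A[X], P.Monic ∧ P.natDegree = k ∧ aeval x P = 0

section Ring

variable {A B : Type*} [CommRing A] [Ring B] [Algebra A B]

namespace IsIntegralOfDegree

variable {x : B}

theorem of_le [Nontrivial A] {d N : ℕ} (hx : IsIntegralOfDegree A x d) (hdN : d ≤ N) :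
    IsIntegralOfDegree A x N := by
  obtain ⟨P, hPm, rfl, hP0⟩ := hx
  refine ⟨X ^ (N - P.natDegree) * P, (monic_X_pow _).mul hPm, ?_, by simp [hP0]⟩
  rw [(monic_X_pow _).natDegree_mul hPm, natDegree_X_pow]
  omega

theorem zero_iff : IsIntegralOfDegree A x 0 ↔ Subsingleton B := by
  constructor
  · rintro ⟨P, hPm, hPd, hP0⟩
    rw [hPm.natDegree_eq_zero.mp hPd, map_one] at hP0
    exact subsingleton_of_zero_eq_one hP0.symm
  · intro
    exact ⟨1, monic_one, natDegree_one, Subsingleton.elim _ _⟩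

theorem nontrivial {k : ℕ} (hx : IsIntegralOfDegree A x k) (hk : k ≠ 0) : Nontrivial A := by
  obtain ⟨P, -, rfl, -⟩ := hx
  contrapose! hk
  exact natDegree_of_subsingleton

end IsIntegralOfDegree

theorem isIntegralOfDegree_spanFinrank_of_mul_mem {M : Submodule A B} (hM : M.FG) (h1 : 1 ∈ M)
    {u : B} (hu : ∀ x ∈ M, u * x ∈ M) : IsIntegralOfDegree A u M.spanFinrank := by
  have : Module.Finite A M := Module.Finite.iff_fg.mpr hM
  have hu' : ∀ x ∈ M, LinearMap.mulLeft A u x ∈ M := hu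
  obtain ⟨P, hPm, hPd, hP0⟩ := LinearMap.exists_monic_and_natDegree_eq_and_aeval_eq_zero A
    ((LinearMap.mulLeft A u).restrict hu')
  refine ⟨P, hPm, hPd.trans (Submodule.spanFinrank_top M), ?_⟩
  have hpow (k : ℕ) (y : M) :
      (((LinearMap.mulLeft A u).restrict hu' ^ k) y : B) = u ^ k * y := by
    rw [Module.End.pow_restrict, LinearMap.restrict_apply]
    simp [LinearMap.pow_mulLeft]
  have h := congr_arg Subtype.val (LinearMap.congr_fun hP0 ⟨1, h1⟩)
  simpa [aeval_endomorphism, hpow, aeval_eq_sum_range, sum_over_range] using h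

theorem Submodule.spanFinrank_span_mul_span_le [DecidableEq B] (s t : Finset B) :
    (span A (s : Set B) * span A (t : Set B)).spanFinrank ≤ s.card * t.card := by
  rw [span_mul_span, ← Finset.coe_mul]
  exact (spanFinrank_span_le_ncard_of_finite (Finset.finite_toSet _)).trans
    ((Set.ncard_coe_finset _).trans_le Finset.card_mul_le)

end Ring

section CommRing

variable {A B : Type*} [CommRing A] [CommRing B] [Algebra A B]

open Submodule

theorem mul_mem_toSubmodule_mul_span_pow [DecidableEq B] {W : Subalgebra A B} {u : B} {n : ℕ}
    (hun : u ^ n ∈ W.toSubmodule * span A ((Finset.range n).image (u ^ ·) : Set B)) {x : B}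
    (hx : x ∈ W.toSubmodule * span A ((Finset.range n).image (u ^ ·) : Set B)) :
    u * x ∈ W.toSubmodule * span A ((Finset.range n).image (u ^ ·) : Set B) := by
  set U := span A ((Finset.range n).image (u ^ ·) : Set B)
  have hstep : span A {u} * U ≤ W.toSubmodule * U := by
    rw [span_mul_span, span_le]
    rintro _ ⟨a, ha, _, hy, rfl⟩
    obtain ⟨k, hk, rfl⟩ := Finset.mem_image.mp hy
    rw [Set.mem_singleton_iff.mp ha, SetLike.mem_coe]
    change u * u ^ k ∈ _
    rw [← pow_succ']
    rcases Nat.lt_or_eq_of_le (Finset.mem_range.mp hk) with hk' | rfl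
    · rw [← one_mul (u ^ (k + 1))]
      exact mul_mem_mul (show (1 : B) ∈ W.toSubmodule from W.one_mem)
        (subset_span (Finset.mem_image_of_mem (u ^ ·) (Finset.mem_range.mpr hk')))
    · exact hun
  have hmul : span A {u} * (W.toSubmodule * U) ≤ W.toSubmodule * U :=
    calc span A {u} * (W.toSubmodule * U) = W.toSubmodule * (span A {u} * U) :=
          mul_left_comm _ _ _
      _ ≤ W.toSubmodule * (W.toSubmodule * U) := mul_le_mul' le_rfl hstep
      _ = W.toSubmodule * U := by rw [← mul_assoc, W.isIdempotentElem_toSubmodule.eq]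
  exact hmul (mul_mem_mul (mem_span_singleton_self u) hx)

theorem pow_eq_sum_smul_mul_pow {n : ℕ} (hn : 0 < n) {v u : B} {b : ℕ → A}
    (hu : u = ∑ i ∈ Finset.range n, algebraMap A B (b i) * v ^ i) :
    u ^ n = ∑ i ∈ Finset.range n, b i • ((v * u) ^ i * u ^ (n - 1 - i)) :=
  calc u ^ n = u * u ^ (n - 1) := by rw [← pow_succ', Nat.sub_add_cancel hn]
    _ = (∑ i ∈ Finset.range n, algebraMap A B (b i) * v ^ i) * u ^ (n - 1) := by rw [← hu]
    _ = _ := by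
      rw [Finset.sum_mul]
      refine Finset.sum_congr rfl fun i hi => ?_
      rw [← pow_sub_mul_pow u (Nat.le_sub_one_of_lt (Finset.mem_range.mp hi)), Algebra.smul_def,
        mul_pow]
      ring

end CommRing

theorem stmt8 {A B : Type*} [CommRing A] [CommRing B] [Algebra A B] (n : ℕ) (hn : 0 < n)
    (m : ℕ) (v : B) (b : ℕ → A) (u : B)
    (hu : u = ∑ i ∈ Finset.range n, algebraMap A B (b i) * v ^ i)
    (hvu : ∃ P : A[X], P.Monic ∧ P.natDegree = m ∧ aeval (v * u) P = 0) :
    ∃ P : A[X], P.Monic ∧ P.natDegree = n * m ∧ aeval u P = 0 := by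
  classical
  rcases Nat.eq_zero_or_pos m with rfl | hm
  · rw [mul_zero]
    exact IsIntegralOfDegree.zero_iff.mpr (IsIntegralOfDegree.zero_iff.mp hvu)
  have : Nontrivial A := IsIntegralOfDegree.nontrivial hvu hm.ne'
  obtain ⟨P, hPm, rfl, hP0⟩ := hvu
  set W := Algebra.adjoin A {v * u}
  set U := Submodule.span A ((Finset.range n).image (u ^ ·) : Set B)
  have hW := Submodule.span_range_natDegree_eq_adjoin hPm hP0
  have h1 : (1 : B) ∈ W.toSubmodule * U := by
    simpa only [pow_zero, one_mul] using
      Submodule.mul_mem_mul (show (1 : B) ∈ W.toSubmodule from W.one_mem)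
        (Submodule.subset_span (Finset.mem_image_of_mem _ (Finset.mem_range.mpr hn)) : u ^ 0 ∈ U)
  have hun : u ^ n ∈ W.toSubmodule * U := by
    rw [pow_eq_sum_smul_mul_pow hn hu]
    refine Submodule.sum_mem _ fun i _ => Submodule.smul_mem _ _ <| Submodule.mul_mem_mul
      (pow_mem (Algebra.self_mem_adjoin_singleton A _) i) (Submodule.subset_span ?_)
    exact Finset.mem_image_of_mem _ (Finset.mem_range.mpr (by omega))
  have hfg : (W.toSubmodule * U).FG :=
    hW ▸ (Submodule.fg_span (Finset.finite_toSet _)).mul (Submodule.fg_span (Finset.finite_toSet _))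
  have hrank : (W.toSubmodule * U).spanFinrank ≤ n * P.natDegree := by
    rw [← hW, mul_comm n]
    refine (Submodule.spanFinrank_span_mul_span_le _ _).trans (Nat.mul_le_mul ?_ ?_) <;>
      exact Finset.card_image_le.trans (Finset.card_range _).le
  exact (isIntegralOfDegree_spanFinrank_of_mul_mem hfg h1
    fun _ hx => mul_mem_toSubmodule_mul_span_pow hun hx).of_le hrank
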